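/- arXiv:1804.01362 — 2 statements merged into one kernel-verified Lean document; each statement's English description precedes it below -/
import Mathlib

section
/- Let γ>2, let g be the Hofbauer potential on Ω={0,1}^ℕ, fix z∈C₀, and let f(s)=ζ(γs) ζ(γ)^{−s}. Then for every s>1 the series Σ_{n≥1} (L_{sg}^n 𝟏)(z) converges and equals (ζ(γ)^{−s} ζ(γs) + ζ(γs) − 1)/(1 − ζ(γs) ζ(γ)^{−s}); moreover lim_{s→1⁺} (s−1) Σ_{n≥1} (L_{sg}^n 𝟏)(z) = ζ(γ)/(−f′(1)), i.e. it equals 1/c with c := −f′(1)/ζ(γ) — the same constant as for the observable 1_{[1]}. -/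
open Real MeasureTheory Filter Topology Set

open scoped Classical

namespace GS

/-- The full shift space `Ω = 𝒜^ℕ`. -/
abbrev Omega (𝒜 : Type) : Type := ℕ → 𝒜

variable {𝒜 : Type}

/-- The left shift `σ(x₁,x₂,…) = (x₂,x₃,…)`. -/
def shift (x : Omega 𝒜) : Omega 𝒜 := fun n => x (n + 1)

/-- Prepending a symbol: `qx = (q,x₁,x₂,…)`. -/
def cons (q : 𝒜) (x : Omega 𝒜) : Omega 𝒜 := fun n => Nat.casesOn n q x

/-- Concatenation `wx` of a finite word `w ∈ 𝒜^k` with `x ∈ Ω`. -/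
def concat {k : ℕ} (w : Fin k → 𝒜) (x : Omega 𝒜) : Omega 𝒜 :=
  fun n => if h : n < k then w ⟨n, h⟩ else x (n - k)

/-- The metric `d(x,y) = 2^{-N(x,y)}`, `N(x,y) = inf{k ≥ 1 : x_k ≠ y_k}`
(sequences are indexed from `0` in Lean, whence the `+ 1`). -/
noncomputable def dOmega (x y : Omega 𝒜) : ℝ :=
  if x = y then 0 else (1 / 2 : ℝ) ^ (sInf {k : ℕ | x k ≠ y k} + 1)

/-- `a : Ω → E` is `α`-Hölder (w.r.t. `dOmega`):
`Hol_α(a) = sup_{x≠y} ‖a x - a y‖ / d(x,y)^α < ∞`. -/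
def IsHolderW (α : ℝ) {E : Type*} [NormedAddCommGroup E] (a : Omega 𝒜 → E) : Prop :=
  ∃ C : ℝ, ∀ x y : Omega 𝒜, ‖a x - a y‖ ≤ C * (dOmega x y) ^ α

/-- The Hölder constant `Hol_α(a) = sup_{x≠y} ‖a x - a y‖ / d(x,y)^α`. -/
noncomputable def HolConst (α : ℝ) {E : Type*} [NormedAddCommGroup E] (a : Omega 𝒜 → E) : ℝ :=
  sSup {r : ℝ | ∃ x y : Omega 𝒜, x ≠ y ∧ r = ‖a x - a y‖ / (dOmega x y) ^ α}

/-- `J` is a `g`-function: continuous, strictly positive, with `∑_{q∈𝒜} J(qx) = 1`. -/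
def IsGFunction [Fintype 𝒜] [TopologicalSpace 𝒜] (J : Omega 𝒜 → ℝ) : Prop :=
  Continuous J ∧ (∀ x, 0 < J x) ∧ ∀ x : Omega 𝒜, ∑ q : 𝒜, J (cons q x) = 1

/-- The Ruelle transfer operator `(L_f φ)(x) = ∑_{q∈𝒜} e^{f(qx)} φ(qx)`. -/
noncomputable def ruelle [Fintype 𝒜] {E : Type*} [AddCommMonoid E] [Module ℝ E]
    (f : Omega 𝒜 → ℝ) (φ : Omega 𝒜 → E) : Omega 𝒜 → E :=
  fun x => ∑ q : 𝒜, Real.exp (f (cons q x)) • φ (cons q x)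

/-- Birkhoff sum `S_k(f) = ∑_{j=0}^{k-1} f ∘ σ^j`. -/
def birkhoff (f : Omega 𝒜 → ℝ) (k : ℕ) (x : Omega 𝒜) : ℝ :=
  ∑ j ∈ Finset.range k, f (shift^[j] x)

/-- `𝕁(wx) = exp (S_k(log J)(wx))` for a word `w` of length `k`. -/
noncomputable def JBirk (J : Omega 𝒜 → ℝ) (k : ℕ) (w : Fin k → 𝒜) (x : Omega 𝒜) : ℝ :=
  Real.exp (birkhoff (fun z => Real.log (J z)) k (concat w x))

/-- `ζ₊(s) = ∑_{k≥1} ∑_{w∈𝒜^k} a(wx) 𝕁(wx)^s`. -/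
noncomputable def zetaPlus [Fintype 𝒜] (J : Omega 𝒜 → ℝ) (a : Omega 𝒜 → ℂ) (x : Omega 𝒜)
    (s : ℝ) : ℂ :=
  ∑' k : ℕ, ∑ w : Fin (k + 1) → 𝒜, a (concat w x) * (((JBirk J (k + 1) w x) ^ s : ℝ) : ℂ)

/-- `ζ₋(s) = ∑_{k≥1} ∑_{w∈𝒜^k} a(wy) 𝕁(wx)^s`. -/
noncomputable def zetaMinus [Fintype 𝒜] (J : Omega 𝒜 → ℝ) (a : Omega 𝒜 → ℂ) (x y : Omega 𝒜)
    (s : ℝ) : ℂ :=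
  ∑' k : ℕ, ∑ w : Fin (k + 1) → 𝒜, a (concat w y) * (((JBirk J (k + 1) w x) ^ s : ℝ) : ℂ)

/-- `L_{log J}^* μ = μ`, i.e. `μ` is a `g`-measure of `J`, tested against continuous functions. -/
def IsGMeasure [Fintype 𝒜] [TopologicalSpace 𝒜] [MeasurableSpace 𝒜]
    (J : Omega 𝒜 → ℝ) (μ : Measure (Omega 𝒜)) : Prop :=
  IsProbabilityMeasure μ ∧
    ∀ φ : Omega 𝒜 → ℂ, Continuous φ →
      ∫ x, ruelle (fun z => Real.log (J z)) φ x ∂μ = ∫ x, φ x ∂μ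

/-- The cylinder set determined by a finite word. -/
def cyl {k : ℕ} (w : Fin k → 𝒜) : Set (Omega 𝒜) := {x | ∀ i : Fin k, x (i : ℕ) = w i}

/-- Entropy of the partition into cylinders of length `n`. -/
noncomputable def blockEntropy [Fintype 𝒜] [MeasurableSpace 𝒜] (μ : Measure (Omega 𝒜))
    (n : ℕ) : ℝ :=
  ∑ w : Fin n → 𝒜, Real.negMulLog (μ (cyl w)).toReal

/-- Kolmogorov–Sinai entropy `h_μ(σ)` of a shift-invariant measure, computed through the
generating partition into cylinders: `h_μ(σ) = lim_n H_n/n = inf_{n≥1} H_n/n`. -/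
noncomputable def KSentropy [Fintype 𝒜] [MeasurableSpace 𝒜] (μ : Measure (Omega 𝒜)) : ℝ :=
  ⨅ n : ℕ, blockEntropy μ (n + 1) / (n + 1)

/-- Topological pressure `P(f) = sup {h_μ(σ) + ∫ f dμ}` over shift-invariant Borel
probability measures. -/
noncomputable def pressure [Fintype 𝒜] [MeasurableSpace 𝒜] (f : Omega 𝒜 → ℝ) : ℝ :=
  sSup {r : ℝ | ∃ μ : Measure (Omega 𝒜), IsProbabilityMeasure μ ∧
    Measure.map shift μ = μ ∧ r = KSentropy μ + ∫ x, f x ∂μ}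

/-- `μ` is an equilibrium state of `f`. -/
def IsEquilibrium [Fintype 𝒜] [MeasurableSpace 𝒜] (f : Omega 𝒜 → ℝ)
    (μ : Measure (Omega 𝒜)) : Prop :=
  IsProbabilityMeasure μ ∧ Measure.map shift μ = μ ∧
    KSentropy μ + ∫ x, f x ∂μ = pressure f

/-- The Walters class `W(Ω,σ)`:
`sup_{n≥1} sup_{w∈𝒜^n} |S_n(f)(wx) − S_n(f)(wy)| → 0` as `d(x,y) → 0`. -/
def WaltersClass [TopologicalSpace 𝒜] (f : Omega 𝒜 → ℝ) : Prop :=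
  Continuous f ∧ ∀ ε > (0:ℝ), ∃ δ > (0:ℝ), ∀ x y : Omega 𝒜, dOmega x y < δ →
    ∀ (n : ℕ) (w : Fin n → 𝒜),
      |birkhoff f n (concat w x) - birkhoff f n (concat w y)| ≤ ε

/-- The set `W*` of finite (nonempty) words over `𝒜`. -/
def Words (𝒜 : Type) : Type := Σ k : ℕ, Fin (k + 1) → 𝒜

end GS
namespace GS

/-- The Riemann zeta function `ζ(γ) = ∑_{n≥1} n^{-γ}` (for real `γ > 1`). -/
noncomputable def zetaR (γ : ℝ) : ℝ := ∑' n : ℕ, ((n : ℝ) + 1) ^ (-γ)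

/-- The Hofbauer potential on `Ω = {0,1}^ℕ`:
`g = −log ζ(γ)` on `C₀ = [0]`, `g = −γ log((k+1)/k)` on `C_k = [1⋯10]` (`k ≥ 1`), and
`g((1,1,1,…)) = 0`. -/
noncomputable def hof (γ : ℝ) (x : Omega (Fin 2)) : ℝ :=
  if h : ∀ n, x n = 1 then 0
  else
    let k := Nat.find (not_forall.mp h)
    if k = 0 then -Real.log (zetaR γ) else -γ * Real.log (((k : ℝ) + 1) / (k : ℝ))

/-- The indicator function of the cylinder `[1] = {x : x₁ = 1}`. -/
noncomputable def indOne (x : Omega (Fin 2)) : ℝ := if x 0 = 1 then 1 else 0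

/-- `L_s^n = (L_{s g}^n 1_{[1]})(z)` for the Hofbauer potential `g`. -/
noncomputable def LsHof (γ s : ℝ) (z : Omega (Fin 2)) (n : ℕ) : ℝ :=
  (ruelle (fun x => s * hof γ x))^[n] indOne z

/-- `(L_{s g}^n 𝟏)(z)` for the Hofbauer potential `g`. -/
noncomputable def MsHof (γ s : ℝ) (z : Omega (Fin 2)) (n : ℕ) : ℝ :=
  (ruelle (fun x => s * hof γ x))^[n] (fun _ => (1 : ℝ)) z

/-- `f'(1)` for `f(s) = ζ(γs) ζ(γ)^{−s}`:
`f′(1) = (γ ζ′(γ) − ζ(γ) log ζ(γ))/ζ(γ)`. -/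
noncomputable def fprime (γ : ℝ) : ℝ :=
  (γ * deriv zetaR γ - zetaR γ * Real.log (zetaR γ)) / zetaR γ

end GS

/-!
For `x ∈ C_k` the value `(L_{sg}^n 𝟏)(x)` depends only on `k`: prepending `0` has weight
`β = ζ(γ)^{-s}` and lands in `C₀`, prepending `1` has weight `((k+2)/(k+1))^{-γs}` and lands in
`C_{k+1}`. After normalising by `(k+1)^{γs}` the weights telescope, and `u_n = (L_{sg}^n 𝟏)(z)`
for `z ∈ C₀` satisfies the renewal equation `u_{n+1} = β ∑_{k ≤ n} a_k u_{n-k} + a_{n+1}` with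
`a_k = (k+1)^{-γs}`, so `∑ u_n = A / (1 - βA)` where `A = ∑ a_k = ζ(γs)`. The denominator is
`1 - f(s)` with `f(1) = 1`, hence `(s-1)/(1 - f(s)) → -1/f'(1)` as `s → 1⁺`.
-/

open Finset

namespace GS

theorem renewal_nonneg {a u : ℕ → ℝ} {β : ℝ} (hβ : 0 ≤ β) (ha_nonneg : ∀ n, 0 ≤ a n)
    (hu_zero : u 0 = a 0)
    (hu_succ : ∀ n, u (n + 1) = β * ∑ k ∈ range (n + 1), a k * u (n - k) + a (n + 1)) (n : ℕ) :
    0 ≤ u n := by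
  induction n using Nat.strong_induction_on with
  | _ n ih =>
    cases n with
    | zero => exact hu_zero ▸ ha_nonneg 0
    | succ n =>
      rw [hu_succ]
      refine add_nonneg (mul_nonneg hβ (sum_nonneg fun k _ => ?_)) (ha_nonneg _)
      exact mul_nonneg (ha_nonneg k) (ih _ (by omega))

theorem sum_range_le_of_renewal {a u : ℕ → ℝ} {β : ℝ} (hβ : 0 ≤ β) (ha_nonneg : ∀ n, 0 ≤ a n)
    (ha : Summable a) (hu_nonneg : ∀ n, 0 ≤ u n) (hu_zero : u 0 = a 0)
    (hu_succ : ∀ n, u (n + 1) = β * ∑ k ∈ range (n + 1), a k * u (n - k) + a (n + 1)) (N : ℕ) :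
    ∑ n ∈ range N, u n ≤ (∑' n, a n) + β * (∑' n, a n) * ∑ n ∈ range N, u n := by
  have hpartial_a : ∀ N, ∑ n ∈ range N, a n ≤ ∑' n, a n := fun N =>
    ha.sum_le_tsum _ fun n _ => ha_nonneg n
  rcases N with _ | N
  · simpa using tsum_nonneg ha_nonneg
  set S := ∑ n ∈ range (N + 1), u n
  -- both indices of the truncated convolution stay below `N`
  have hconv : ∑ n ∈ range N, ∑ k ∈ range (n + 1), a k * u (n - k) ≤ (∑' n, a n) * S := by
    rw [sum_range_diag_flip N fun k j => a k * u j]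
    calc ∑ m ∈ range N, ∑ k ∈ range (N - m), a m * u k
        ≤ ∑ m ∈ range N, a m * S := by
          refine sum_le_sum fun m _ => ?_
          rw [← mul_sum]
          exact mul_le_mul_of_nonneg_left (sum_le_sum_of_subset_of_nonneg
            (range_subset_range.2 (by omega)) fun n _ _ => hu_nonneg n) (ha_nonneg m)
      _ ≤ (∑' n, a n) * S := by
          rw [← sum_mul]
          exact mul_le_mul_of_nonneg_right (hpartial_a N) (sum_nonneg fun n _ => hu_nonneg n)
  calc S = β * ∑ n ∈ range N, ∑ k ∈ range (n + 1), a k * u (n - k)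
        + ∑ n ∈ range (N + 1), a n := by
        simp only [S, sum_range_succ' u, sum_range_succ' a, hu_succ, sum_add_distrib, mul_sum,
          hu_zero]
        ring
    _ ≤ β * ((∑' n, a n) * S) + ∑' n, a n := by gcongr; exact hpartial_a _
    _ = (∑' n, a n) + β * (∑' n, a n) * S := by ring

theorem hasSum_of_renewal {a u : ℕ → ℝ} {β : ℝ} (hβ : 0 ≤ β) (ha_nonneg : ∀ n, 0 ≤ a n)
    (ha : Summable a) (hβa : β * ∑' n, a n < 1) (hu_zero : u 0 = a 0)
    (hu_succ : ∀ n, u (n + 1) = β * ∑ k ∈ range (n + 1), a k * u (n - k) + a (n + 1)) :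
    HasSum u ((∑' n, a n) / (1 - β * ∑' n, a n)) := by
  set A := ∑' n, a n
  have hden : 0 < 1 - β * A := by linarith
  have hu_nonneg := renewal_nonneg hβ ha_nonneg hu_zero hu_succ
  have hsummable : Summable u := by
    refine summable_of_sum_range_le (c := A / (1 - β * A)) hu_nonneg fun N => ?_
    rw [le_div_iff₀ hden]
    linarith [sum_range_le_of_renewal hβ ha_nonneg ha hu_nonneg hu_zero hu_succ N]
  have hcauchy : A * ∑' n, u n = ∑' n, ∑ k ∈ range (n + 1), a k * u (n - k) :=
    tsum_mul_tsum_eq_tsum_sum_range_of_summable_norm ha.norm hsummable.norm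
  have hconv := (summable_norm_sum_mul_range_of_summable_norm ha.norm hsummable.norm).of_norm
  have hrenewal : ∑' n, u n = A + β * A * ∑' n, u n := calc
    ∑' n, u n = a 0 + (β * ∑' n, ∑ k ∈ range (n + 1), a k * u (n - k) + ∑' n, a (n + 1)) := by
      rw [hsummable.tsum_eq_zero_add, hu_zero, tsum_congr hu_succ,
        (hconv.mul_left β).tsum_add ((summable_nat_add_iff 1).2 ha), tsum_mul_left]
    _ = A + β * A * ∑' n, u n := by
      rw [← hcauchy, show A = a 0 + ∑' n, a (n + 1) from ha.tsum_eq_zero_add]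
      ring
  convert hsummable.hasSum
  rw [div_eq_iff hden.ne']
  linear_combination -hrenewal

noncomputable def runWeight (a : ℕ → ℝ) (β : ℝ) : ℕ → ℕ → ℝ
  | 0, k => a k
  | n + 1, k => β * a k * runWeight a β n 0 + runWeight a β n (k + 1)

theorem runWeight_succ (a : ℕ → ℝ) (β : ℝ) (n k : ℕ) :
    runWeight a β (n + 1) k
      = β * ∑ j ∈ range (n + 1), a (k + j) * runWeight a β (n - j) 0 + a (k + n + 1) := by
  induction n generalizing k with
  | zero => simp [runWeight, mul_assoc]
  | succ n ih =>
    rw [runWeight, ih (k + 1), sum_range_succ' _ (n + 1)]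
    simp only [add_zero, Nat.sub_zero, Nat.add_sub_add_right]
    ring_nf

theorem hasSum_runWeight_zero {a : ℕ → ℝ} {β : ℝ} (hβ : 0 ≤ β) (ha_nonneg : ∀ n, 0 ≤ a n)
    (ha : Summable a) (hβa : β * ∑' n, a n < 1) :
    HasSum (fun n => runWeight a β n 0) ((∑' n, a n) / (1 - β * ∑' n, a n)) :=
  hasSum_of_renewal hβ ha_nonneg ha hβa rfl fun n => by simpa using runWeight_succ a β n 0

/-- `x ∈ C_k`. -/
def RunLength (x : Omega (Fin 2)) (k : ℕ) : Prop := (∀ i < k, x i = 1) ∧ x k = 0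

theorem RunLength.cons_zero (x : Omega (Fin 2)) : RunLength (cons 0 x) 0 :=
  ⟨fun _ h => absurd h (Nat.not_lt_zero _), rfl⟩

theorem RunLength.cons_one {x : Omega (Fin 2)} {k : ℕ} (h : RunLength x k) :
    RunLength (cons 1 x) (k + 1) :=
  ⟨fun i hi => by cases i with
    | zero => rfl
    | succ i => exact h.1 i (by omega), h.2⟩

theorem hof_of_runLength (γ : ℝ) {x : Omega (Fin 2)} {k : ℕ} (h : RunLength x k) :
    hof γ x = if k = 0 then -Real.log (zetaR γ)
      else -γ * Real.log (((k : ℝ) + 1) / (k : ℝ)) := by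
  have hx : ¬ ∀ n, x n = 1 := fun hall => by simpa [h.2] using hall k
  have hfind : Nat.find (not_forall.mp hx) = k :=
    (Nat.find_eq_iff _).2 ⟨by simp [h.2], fun m hm => not_not.2 (h.1 m hm)⟩
  rw [hof, dif_neg hx]
  simp only [hfind]

theorem ruelle_iterate_one_of_runLength {γ : ℝ} (hζ : 0 < zetaR γ) (s : ℝ) (n : ℕ)
    {x : Omega (Fin 2)} {k : ℕ} (hx : RunLength x k) :
    (ruelle (fun y => s * hof γ y))^[n] (fun _ => 1) x
      = ((k : ℝ) + 1) ^ (γ * s)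
        * runWeight (fun j => ((j : ℝ) + 1) ^ (-(γ * s))) (zetaR γ ^ (-s)) n k := by
  induction n generalizing x k with
  | zero =>
    rw [Function.iterate_zero_apply, runWeight, Real.rpow_neg (by positivity),
      mul_inv_cancel₀ (by positivity)]
  | succ n ih =>
    have hβ : Real.exp (s * -Real.log (zetaR γ)) = zetaR γ ^ (-s) := by
      rw [Real.rpow_def_of_pos hζ]; ring_nf
    have hinv : ((k : ℝ) + 1) ^ (γ * s) * ((k : ℝ) + 1) ^ (-(γ * s)) = 1 := by
      rw [Real.rpow_neg (by positivity), mul_inv_cancel₀ (by positivity)]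
    have hratio : Real.exp (s * (-γ * Real.log ((((k + 1 : ℕ) : ℝ) + 1) / ((k + 1 : ℕ) : ℝ))))
        * (((k + 1 : ℕ) : ℝ) + 1) ^ (γ * s) = ((k : ℝ) + 1) ^ (γ * s) := by
      push_cast
      rw [show s * (-γ * Real.log ((k + 1 + 1) / (k + 1))) = Real.log ((k + 1 + 1) / (k + 1))
          * (-(γ * s)) by ring, ← Real.rpow_def_of_pos (by positivity),
        Real.rpow_neg (by positivity), Real.div_rpow (by positivity) (by positivity)]
      field_simp
    rw [Function.iterate_succ_apply', ruelle, Fin.sum_univ_two, ih (RunLength.cons_zero x),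
      ih hx.cons_one, hof_of_runLength γ (RunLength.cons_zero x), hof_of_runLength γ hx.cons_one,
      runWeight]
    simp only [if_true, Nat.succ_ne_zero, if_false, smul_eq_mul, hβ, Nat.cast_zero, zero_add,
      Real.one_rpow, one_mul]
    set W := runWeight (fun j => ((j : ℝ) + 1) ^ (-(γ * s))) (zetaR γ ^ (-s)) n
    linear_combination W (k + 1) * hratio - zetaR γ ^ (-s) * W 0 * hinv

theorem summable_nat_add_one_rpow_neg {x : ℝ} (hx : 1 < x) :
    Summable fun n : ℕ => ((n : ℝ) + 1) ^ (-x) := by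
  simpa using (summable_nat_add_iff 1).2 (Real.summable_nat_rpow.2 (by linarith : -x < -1))

theorem one_lt_zetaR {x : ℝ} (hx : 1 < x) : 1 < zetaR x := by
  have htail : 0 < ∑' n : ℕ, ((n + 1 : ℕ) + (1 : ℝ)) ^ (-x) :=
    ((summable_nat_add_iff 1).2 (summable_nat_add_one_rpow_neg hx)).tsum_pos
      (fun _ => by positivity) 0 (by positivity)
  rw [zetaR, (summable_nat_add_one_rpow_neg hx).tsum_eq_zero_add]
  simpa using htail

theorem zetaR_le_zetaR {x y : ℝ} (hx : 1 < x) (hxy : x ≤ y) : zetaR y ≤ zetaR x :=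
  (summable_nat_add_one_rpow_neg (hx.trans_le hxy)).tsum_le_tsum
    (fun n => Real.rpow_le_rpow_of_exponent_le (by simp) (by linarith))
    (summable_nat_add_one_rpow_neg hx)

theorem hasDerivAt_zetaR {x : ℝ} (hx : 1 < x) :
    HasDerivAt zetaR (-∑' n : ℕ, Real.log ((n : ℝ) + 1) * ((n : ℝ) + 1) ^ (-x)) x := by
  set c := (1 + x) / 2
  set ε := (c - 1) / 2
  have hε : 0 < ε := by simp only [ε, c]; linarith
  have hterm : ∀ (n : ℕ) (y : ℝ), HasDerivAt (fun y => ((n : ℝ) + 1) ^ (-y))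
      (-(Real.log ((n : ℝ) + 1) * ((n : ℝ) + 1) ^ (-y))) y := fun n y =>
    ((hasDerivAt_neg y).const_rpow (by positivity)).congr_deriv (by ring)
  -- `log t ≤ t ^ ε / ε` trades the logarithm for a slightly weaker decay exponent
  have hbound : ∀ (n : ℕ), ∀ y ∈ Ioi c,
      ‖-(Real.log ((n : ℝ) + 1) * ((n : ℝ) + 1) ^ (-y))‖ ≤ ε⁻¹ * ((n : ℝ) + 1) ^ (-(c - ε)) := by
    intro n y hy
    have hn : (1 : ℝ) ≤ (n : ℝ) + 1 := by simp
    rw [norm_neg, norm_mul, Real.norm_of_nonneg (Real.log_nonneg hn),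
      Real.norm_of_nonneg (by positivity)]
    calc Real.log ((n : ℝ) + 1) * ((n : ℝ) + 1) ^ (-y)
        ≤ (((n : ℝ) + 1) ^ ε / ε) * ((n : ℝ) + 1) ^ (-c) :=
          mul_le_mul (Real.log_le_rpow_div (by positivity) hε)
            (Real.rpow_le_rpow_of_exponent_le hn (by linarith [hy.out])) (by positivity)
            (by positivity)
      _ = ε⁻¹ * ((n : ℝ) + 1) ^ (-(c - ε)) := by
          rw [div_mul_eq_mul_div, ← Real.rpow_add (by positivity)]
          ring_nf
  have hx_mem : x ∈ Ioi c := by simp only [c, Set.mem_Ioi]; linarith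
  have hdecay : 1 < c - ε := by simp only [ε, c]; linarith
  have hdominating := (summable_nat_add_one_rpow_neg hdecay).mul_left ε⁻¹
  exact (hasDerivAt_tsum_of_isPreconnected hdominating isOpen_Ioi isPreconnected_Ioi
    (fun n y _ => hterm n y) hbound hx_mem (summable_nat_add_one_rpow_neg hx) hx_mem).congr_deriv
    tsum_neg

theorem deriv_zetaR_nonpos {x : ℝ} (hx : 1 < x) : deriv zetaR x ≤ 0 := by
  rw [(hasDerivAt_zetaR hx).deriv, neg_nonpos]
  exact tsum_nonneg fun n => mul_nonneg (Real.log_nonneg (by simp)) (by positivity)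

theorem fprime_neg {γ : ℝ} (hγ : 1 < γ) : fprime γ < 0 := by
  have hζ := one_lt_zetaR hγ
  have hlog := Real.log_pos hζ
  have hderiv := deriv_zetaR_nonpos hγ
  rw [fprime]
  refine div_neg_of_neg_of_pos ?_ (by linarith)
  nlinarith

theorem hasDerivAt_zetaR_mul_rpow_neg {γ : ℝ} (hγ : 1 < γ) :
    HasDerivAt (fun s => zetaR (γ * s) * zetaR γ ^ (-s)) (fprime γ) 1 := by
  have hζ : 0 < zetaR γ := zero_lt_one.trans (one_lt_zetaR hγ)
  have hscale : HasDerivAt (fun s => zetaR (γ * s)) (deriv zetaR γ * γ) 1 :=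
    (hasDerivAt_zetaR hγ).differentiableAt.hasDerivAt.comp_of_eq 1
      ((hasDerivAt_id 1).const_mul γ |>.congr_deriv (mul_one γ)) (mul_one γ).symm
  have hpow : HasDerivAt (fun s : ℝ => zetaR γ ^ (-s))
      (Real.log (zetaR γ) * -1 * zetaR γ ^ (-1 : ℝ)) 1 :=
    (hasDerivAt_neg (1 : ℝ)).const_rpow hζ
  refine (hscale.mul hpow).congr_deriv ?_
  rw [fprime, mul_one, Real.rpow_neg_one]
  field_simp
  ring

theorem tendsto_sub_mul_div_one_sub {f N : ℝ → ℝ} {x f' L : ℝ} (hf : HasDerivAt f f' x)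
    (hfx : f x = 1) (hf' : f' ≠ 0) (hN : Tendsto N (𝓝[>] x) (𝓝 L)) :
    Tendsto (fun s => (s - x) * (N s / (1 - f s))) (𝓝[>] x) (𝓝 (L / -f')) := by
  have hslope : Tendsto (slope f x) (𝓝[>] x) (𝓝 f') :=
    (hasDerivAt_iff_tendsto_slope.1 hf).mono_left (nhdsGT_le_nhdsNE x)
  rw [div_eq_mul_inv, inv_neg]
  refine (hN.mul (hslope.inv₀ hf').neg).congr fun s => ?_
  rw [slope_def_field, hfx, inv_div, ← neg_sub (f s), div_neg]
  ring

theorem hasSum_msHof {γ s : ℝ} (hγ : 1 < γ) (hs : 1 < s) {z : Omega (Fin 2)} (hz : z 0 = 0) :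
    HasSum (fun n => MsHof γ s z (n + 1))
      ((zetaR γ ^ (-s) * zetaR (γ * s) + zetaR (γ * s) - 1)
        / (1 - zetaR (γ * s) * zetaR γ ^ (-s))) := by
  have hζ := one_lt_zetaR hγ
  have hγs : 1 < γ * s := by nlinarith
  have hβA : zetaR γ ^ (-s) * zetaR (γ * s) < 1 := calc
    zetaR γ ^ (-s) * zetaR (γ * s) ≤ zetaR γ ^ (-s) * zetaR γ :=
        mul_le_mul_of_nonneg_left (zetaR_le_zetaR hγ (by nlinarith)) (by positivity)
    _ < zetaR γ ^ (-1 : ℝ) * zetaR γ :=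
        mul_lt_mul_of_pos_right (Real.rpow_lt_rpow_of_exponent_lt hζ (by linarith)) (by positivity)
    _ = 1 := by rw [Real.rpow_neg_one, inv_mul_cancel₀ (by positivity)]
  have hMs : ∀ n, MsHof γ s z n
      = runWeight (fun j => ((j : ℝ) + 1) ^ (-(γ * s))) (zetaR γ ^ (-s)) n 0 := fun n => by
    rw [MsHof, ruelle_iterate_one_of_runLength (by positivity) s n
      ⟨fun _ h => absurd h (Nat.not_lt_zero _), hz⟩]
    simp
  have hrenewal := hasSum_runWeight_zero (by positivity) (fun _ => by positivity)
    (summable_nat_add_one_rpow_neg hγs) hβA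
  rw [← hasSum_nat_add_iff' 1, sum_range_one] at hrenewal
  simp only [← hMs] at hrenewal
  have hvalue : (zetaR γ ^ (-s) * zetaR (γ * s) + zetaR (γ * s) - 1)
      / (1 - zetaR (γ * s) * zetaR γ ^ (-s))
      = zetaR (γ * s) / (1 - zetaR γ ^ (-s) * zetaR (γ * s)) - MsHof γ s z 0 := by
    rw [hMs, runWeight, Nat.cast_zero, zero_add, Real.one_rpow, eq_sub_iff_add_eq,
      mul_comm (zetaR (γ * s)), div_add_one (sub_pos.2 hβA).ne']
    ring
  rwa [hvalue]

/-- the Hofbauer model with observable `𝟏`.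
For `γ > 2` and `z ∈ C₀`: for every `s > 1` the series `∑_{n≥1} (L_{sg}^n 𝟏)(z)` converges and
equals `(ζ(γ)^{−s} ζ(γs) + ζ(γs) − 1)/(1 − ζ(γs) ζ(γ)^{−s})`; moreover
`lim_{s→1⁺} (s−1) ∑_{n≥1} (L_{sg}^n 𝟏)(z) = ζ(γ)/(−f′(1)) = 1/c` with `c := −f′(1)/ζ(γ)` —
the same constant as for the observable `1_{[1]}`. -/
theorem statement12 (γ : ℝ) (hγ : 2 < γ) (z : Omega (Fin 2)) (hz : z 0 = 0) :
    (∀ s : ℝ, 1 < s →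
      Summable (fun n : ℕ => MsHof γ s z (n + 1)) ∧
        ∑' n : ℕ, MsHof γ s z (n + 1)
          = (zetaR γ ^ (-s) * zetaR (γ * s) + zetaR (γ * s) - 1)
              / (1 - zetaR (γ * s) * zetaR γ ^ (-s))) ∧
    Tendsto (fun s : ℝ => (s - 1) * ∑' n : ℕ, MsHof γ s z (n + 1)) (𝓝[>] (1 : ℝ))
      (𝓝 (zetaR γ / (-fprime γ))) ∧
    zetaR γ / (-fprime γ) = 1 / (-fprime γ / zetaR γ) := by
  have hγ1 : 1 < γ := by linarith
  have hζ : 0 < zetaR γ := zero_lt_one.trans (one_lt_zetaR hγ1)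
  have hf_one : zetaR (γ * 1) * zetaR γ ^ (-1 : ℝ) = 1 := by
    rw [mul_one, Real.rpow_neg_one, mul_inv_cancel₀ hζ.ne']
  have hscale : ContinuousAt (fun s => zetaR (γ * s)) 1 :=
    (hasDerivAt_zetaR hγ1).continuousAt.comp_of_eq (continuousAt_const.mul continuousAt_id)
      (mul_one γ)
  have hpow : ContinuousAt (fun s : ℝ => zetaR γ ^ (-s)) 1 :=
    continuousAt_const.rpow continuousAt_neg (Or.inl hζ.ne')
  have hnum : Tendsto (fun s => zetaR γ ^ (-s) * zetaR (γ * s) + zetaR (γ * s) - 1)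
      (𝓝[>] 1) (𝓝 (zetaR γ)) := by
    have hcont : ContinuousAt (fun s => zetaR γ ^ (-s) * zetaR (γ * s) + zetaR (γ * s) - 1) 1 :=
      ((hpow.mul hscale).add hscale).sub continuousAt_const
    convert hcont.tendsto.mono_left nhdsWithin_le_nhds using 2
    rw [mul_comm, hf_one, mul_one, add_sub_cancel_left]
  refine ⟨fun s hs => ⟨(hasSum_msHof hγ1 hs hz).summable, (hasSum_msHof hγ1 hs hz).tsum_eq⟩,
    ?_, (one_div_div _ _).symm⟩
  refine (tendsto_sub_mul_div_one_sub (hasDerivAt_zetaR_mul_rpow_neg hγ1) hf_one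
    (fprime_neg hγ1).ne hnum).congr' ?_
  filter_upwards [self_mem_nhdsWithin] with s hs
  rw [(hasSum_msHof hγ1 hs hz).tsum_eq]

end GS
end

section
/- Let J be a g-function, fix x,y∈Ω, and let 0<α<1 satisfy α·|𝒜| < min{J(qz) : q∈𝒜, z∈Ω}. If a:Ω→ℂ is Lipschitz with respect to the metric d_α(u,v)=α^{N(u,v)}, then Σ_{w∈W*} |a(wx) − a(wy)| / 𝕁(wx) < ∞, where W* denotes the set of all finite words over 𝒜. -/
open Real MeasureTheory Filter Topology Set

open scoped Classical

namespace GS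

/-- The metric `d_α(u,v) = α^{N(u,v)}`, with `N(u,v) = inf{k ≥ 1 : u_k ≠ v_k}` and the
convention `α^{+∞} = 0` when `u = v` (sequences indexed from `0` in Lean). -/
noncomputable def dAlpha (α : ℝ) {𝒜 : Type} (u v : Omega 𝒜) : ℝ :=
  if u = v then 0 else α ^ (sInf {k : ℕ | u k ≠ v k} + 1)

/-!
The `w`-term is small for two independent reasons: `wx` and `wy` share the prefix `w`, so
`d_α(wx, wy) ≤ α^{|w|+1}`, while every factor of `𝕁(wx)` is at least `m = min J`, so
`𝕁(wx) ≥ m^{|w|}`. Each term is therefore at most `C (α/m)^{|w|}`, and since there are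
`|𝒜|^k` words of length `k`, the sum is dominated by the geometric series of ratio
`α|𝒜|/m < 1`.
-/

section

variable {𝒜 : Type}

theorem concat_apply_of_lt {n : ℕ} (w : Fin n → 𝒜) (x : Omega 𝒜) {i : ℕ} (hi : i < n) :
    concat w x i = w ⟨i, hi⟩ :=
  dif_pos hi

theorem dAlpha_nonneg {α : ℝ} (hα : 0 ≤ α) (u v : Omega 𝒜) : 0 ≤ dAlpha α u v := by
  unfold dAlpha
  split_ifs <;> positivity

theorem dAlpha_le_pow_of_forall_lt_eq {α : ℝ} (hα0 : 0 ≤ α) (hα1 : α ≤ 1)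
    {u v : Omega 𝒜} {n : ℕ} (huv : ∀ i < n, u i = v i) :
    dAlpha α u v ≤ α ^ (n + 1) := by
  unfold dAlpha
  split_ifs with h
  · positivity
  · have hN : n ≤ sInf {k : ℕ | u k ≠ v k} :=
      le_csInf (Function.ne_iff.mp h) fun k hk => not_lt.mp fun hkn => hk (huv k hkn)
    exact pow_le_pow_of_le_one hα0 hα1 (by omega)

theorem dAlpha_concat_le {α : ℝ} (hα0 : 0 ≤ α) (hα1 : α ≤ 1) {n : ℕ} (w : Fin n → 𝒜)
    (x y : Omega 𝒜) : dAlpha α (concat w x) (concat w y) ≤ α ^ (n + 1) :=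
  dAlpha_le_pow_of_forall_lt_eq hα0 hα1 fun i hi => by
    rw [concat_apply_of_lt w x hi, concat_apply_of_lt w y hi]

theorem pow_le_JBirk {J : Omega 𝒜 → ℝ} {m : ℝ} (hm : 0 < m) (hJm : ∀ z, m ≤ J z) (n : ℕ)
    (w : Fin n → 𝒜) (x : Omega 𝒜) : m ^ n ≤ JBirk J n w x := by
  have hsum : n * Real.log m ≤ birkhoff (fun z => Real.log (J z)) n (concat w x) := by
    simpa [birkhoff] using Finset.card_nsmul_le_sum (Finset.range n) _ _
      fun j _ => Real.log_le_log hm (hJm (shift^[j] (concat w x)))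
  calc m ^ n = Real.exp (n * Real.log m) := by rw [Real.exp_nat_mul, Real.exp_log hm]
    _ ≤ JBirk J n w x := Real.exp_le_exp.mpr hsum

theorem norm_sub_div_JBirk_le {E : Type*} [NormedAddCommGroup E] {a : Omega 𝒜 → E}
    {J : Omega 𝒜 → ℝ} {α m C : ℝ} (hα0 : 0 ≤ α) (hα1 : α ≤ 1) (hm : 0 < m)
    (hJm : ∀ z, m ≤ J z) (hC : 0 ≤ C) (ha : ∀ u v, ‖a u - a v‖ ≤ C * dAlpha α u v)
    {n : ℕ} (w : Fin n → 𝒜) (x y : Omega 𝒜) :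
    ‖a (concat w x) - a (concat w y)‖ / JBirk J n w x ≤ C * (α / m) ^ n := by
  have hnum : ‖a (concat w x) - a (concat w y)‖ ≤ C * α ^ n :=
    (ha _ _).trans <| mul_le_mul_of_nonneg_left
      ((dAlpha_concat_le hα0 hα1 w x y).trans (pow_le_pow_of_le_one hα0 hα1 n.le_succ)) hC
  rw [div_pow, ← mul_div_assoc]
  exact div_le_div₀ (by positivity) hnum (by positivity) (pow_le_JBirk hm hJm n w x)

theorem summable_of_le_geometric_length [Fintype 𝒜] {f : Words 𝒜 → ℝ} {C ρ : ℝ}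
    (hf0 : ∀ w, 0 ≤ f w) (hρ : 0 ≤ ρ) (hρ1 : Fintype.card 𝒜 * ρ < 1)
    (hf : ∀ w, f w ≤ C * ρ ^ (w.1 + 1)) : Summable f := by
  refine (summable_sigma_of_nonneg hf0).mpr ⟨fun _ => Summable.of_finite, ?_⟩
  have hgeom : Summable fun k : ℕ => C * (Fintype.card 𝒜 * ρ) ^ (k + 1) :=
    (((summable_geometric_of_lt_one (by positivity) hρ1).mul_right (Fintype.card 𝒜 * ρ)).mul_left
      C).congr fun k => by ring
  refine hgeom.of_nonneg_of_le (fun k => tsum_nonneg fun w => hf0 ⟨k, w⟩) fun k => ?_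
  calc ∑' w : Fin (k + 1) → 𝒜, f ⟨k, w⟩
      ≤ ∑ _w : Fin (k + 1) → 𝒜, C * ρ ^ (k + 1) := by
        rw [tsum_fintype]
        exact Finset.sum_le_sum fun w _ => hf ⟨k, w⟩
    _ = C * (Fintype.card 𝒜 * ρ) ^ (k + 1) := by
        simp only [Finset.sum_const, Finset.card_univ, Fintype.card_fun, Fintype.card_fin,
          nsmul_eq_mul]
        push_cast
        ring

end

theorem statement13_general {𝒜 : Type} [Fintype 𝒜] [TopologicalSpace 𝒜]
    (J : Omega 𝒜 → ℝ) (hJ : IsGFunction J) (x y : Omega 𝒜)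
    (α : ℝ) (hα : α ∈ Set.Ioo (0 : ℝ) 1)
    (hsmall : α * (Fintype.card 𝒜 : ℝ) < sInf (Set.range J))
    (a : Omega 𝒜 → ℂ)
    (ha : ∃ C : ℝ, ∀ u v : Omega 𝒜, ‖a u - a v‖ ≤ C * dAlpha α u v) :
    Summable (fun w : Words 𝒜 =>
      ‖a (concat w.2 x) - a (concat w.2 y)‖ / JBirk J (w.1 + 1) w.2 x) := by
  obtain ⟨C, hC⟩ := ha
  obtain ⟨hα0, hα1⟩ := hα
  set m := sInf (Set.range J)
  have hm : 0 < m := lt_of_le_of_lt (by positivity) hsmall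
  have hJm : ∀ z, m ≤ J z := fun z =>
    csInf_le ⟨0, by rintro _ ⟨z, rfl⟩; exact (hJ.2.1 z).le⟩ ⟨z, rfl⟩
  have hC' : ∀ u v, ‖a u - a v‖ ≤ max C 0 * dAlpha α u v := fun u v =>
    (hC u v).trans <| mul_le_mul_of_nonneg_right (le_max_left C 0) (dAlpha_nonneg hα0.le u v)
  refine summable_of_le_geometric_length (C := max C 0) (ρ := α / m)
    (fun w => div_nonneg (norm_nonneg _) (Real.exp_nonneg _)) (by positivity) ?_ fun w =>
      norm_sub_div_JBirk_le hα0.le hα1.le hm hJm (le_max_right C 0) hC' w.2 x y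
  rwa [← mul_div_assoc, div_lt_one hm, mul_comm]

/-- boundedness of the commutator `[D, L_a]`.
If `J` is a `g`-function and `0 < α < 1` satisfies `α|𝒜| < min J`, then for every `a`
Lipschitz w.r.t. `d_α`, `∑_{w ∈ W*} |a(wx) − a(wy)|/𝕁(wx) < ∞`. -/
theorem statement13 {𝒜 : Type} [Fintype 𝒜] [TopologicalSpace 𝒜] [DiscreteTopology 𝒜]
    (hcard : 2 ≤ Fintype.card 𝒜)
    (J : Omega 𝒜 → ℝ) (hJ : IsGFunction J) (x y : Omega 𝒜)
    (α : ℝ) (hα : α ∈ Set.Ioo (0 : ℝ) 1)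
    (hsmall : α * (Fintype.card 𝒜 : ℝ) < sInf (Set.range J))
    (a : Omega 𝒜 → ℂ)
    (ha : ∃ C : ℝ, ∀ u v : Omega 𝒜, ‖a u - a v‖ ≤ C * dAlpha α u v) :
    Summable (fun w : Words 𝒜 =>
      ‖a (concat w.2 x) - a (concat w.2 y)‖ / JBirk J (w.1 + 1) w.2 x) :=
  statement13_general J hJ x y α hα hsmall a ha

end GS
end
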